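/- arXiv:1804.00085 — 3 statements merged into one kernel-verified Lean document; each statement's English description precedes it below -/
import Mathlib

section
/- For every x ∈ [1/3, 3/8), one has σ²(x) < σ²(c). -/
open scoped BigOperators

/-- `V x ξ = min x ξ - x * ξ`. -/
noncomputable def V (x ξ : ℝ) : ℝ := min x ξ - x * ξ

/-- `σ²(x) = V(⟨x⟩, ⟨x⟩) + 2 ∑_{k=1}^∞ 6^{-k} V(⟨2^k x⟩, ⟨3^k x⟩)`. -/
noncomputable def sigmaSq (x : ℝ) : ℝ :=
  V (Int.fract x) (Int.fract x) +
    2 * ∑' k : ℕ, (1 / 6 ^ (k + 1) : ℝ) *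
      V (Int.fract ((2 : ℝ) ^ (k + 1) * x)) (Int.fract ((3 : ℝ) ^ (k + 1) * x))

/-- `c = 277/665 = 277/(3^6 - 2^6)`. -/
noncomputable def c : ℝ := 277 / 665

lemma V_nonneg' {a b : ℝ} (ha : 0 ≤ a) (ha' : a ≤ 1) (hb : 0 ≤ b) (hb' : b ≤ 1) :
    0 ≤ V a b := by
  rcases le_total a b with h | h
  · rw [V, min_eq_left h]; nlinarith
  · rw [V, min_eq_right h]; nlinarith

lemma V_le_quarter {a b : ℝ} (ha : 0 ≤ a) (ha' : a ≤ 1) (hb : 0 ≤ b) (hb' : b ≤ 1) :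
    V a b ≤ 1/4 := by
  rcases le_total a b with h | h
  · rw [V, min_eq_left h]
    nlinarith [sq_nonneg (2*a-1), mul_nonneg ha (sub_nonneg.mpr h)]
  · rw [V, min_eq_right h]
    nlinarith [sq_nonneg (2*b-1), mul_nonneg hb (sub_nonneg.mpr h)]

lemma term_nonneg (x : ℝ) (k : ℕ) :
    0 ≤ (1 / 6 ^ (k + 1) : ℝ) *
      V (Int.fract ((2 : ℝ) ^ (k + 1) * x)) (Int.fract ((3 : ℝ) ^ (k + 1) * x)) := by
  apply mul_nonneg (by positivity)
  exact V_nonneg' (Int.fract_nonneg _) (Int.fract_lt_one _).le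
    (Int.fract_nonneg _) (Int.fract_lt_one _).le

lemma term_le (x : ℝ) (k : ℕ) :
    (1 / 6 ^ (k + 1) : ℝ) *
      V (Int.fract ((2 : ℝ) ^ (k + 1) * x)) (Int.fract ((3 : ℝ) ^ (k + 1) * x))
      ≤ (1/4) * (1/6 : ℝ) ^ (k + 1) := by
  have h := V_le_quarter (Int.fract_nonneg ((2 : ℝ) ^ (k + 1) * x))
    (Int.fract_lt_one _).le (Int.fract_nonneg ((3 : ℝ) ^ (k + 1) * x))
    (Int.fract_lt_one _).le
  have h6 : (1 / 6 ^ (k + 1) : ℝ) = (1/6 : ℝ) ^ (k + 1) := by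
    rw [one_div_pow]
  rw [h6]
  nlinarith [pow_nonneg (by norm_num : (0:ℝ) ≤ 1/6) (k+1)]

lemma summable_term (x : ℝ) :
    Summable (fun k : ℕ => (1 / 6 ^ (k + 1) : ℝ) *
      V (Int.fract ((2 : ℝ) ^ (k + 1) * x)) (Int.fract ((3 : ℝ) ^ (k + 1) * x))) := by
  apply Summable.of_nonneg_of_le (term_nonneg x) (term_le x)
  have h := summable_geometric_of_lt_one (by norm_num : (0:ℝ) ≤ 1/6) (by norm_num)
  exact ((h.mul_left ((1:ℝ)/6)).mul_left (1/4)).congr (fun k => by ring)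

lemma summable_geom_aux : Summable (fun k : ℕ => (1/4) * (1/6 : ℝ) ^ (k + 2)) := by
  have h := summable_geometric_of_lt_one (by norm_num : (0:ℝ) ≤ 1/6) (by norm_num)
  exact ((h.mul_left ((1:ℝ)/36)).mul_left (1/4)).congr (fun k => by ring)

lemma tsum_geom_aux : ∑' k : ℕ, (1/4) * (1/6 : ℝ) ^ (k + 2) = 1/120 := by
  have h : ∑' k : ℕ, (1/6 : ℝ) ^ k = (1 - 1/6)⁻¹ :=
    tsum_geometric_of_lt_one (by norm_num) (by norm_num)
  calc ∑' k : ℕ, (1/4) * (1/6 : ℝ) ^ (k + 2)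
      = ∑' k : ℕ, (1/144) * (1/6 : ℝ) ^ k := by
        congr 1; funext k; ring
    _ = (1/144) * ∑' k : ℕ, (1/6 : ℝ) ^ k := tsum_mul_left
    _ = 1/120 := by rw [h]; norm_num

theorem sigmaSq_lt_on_interval_8 (x : ℝ) (hx : x ∈ Set.Ico (1/3 : ℝ) (3/8)) :
    sigmaSq x < sigmaSq c := by
  obtain ⟨hx1, hx2⟩ := hx
  have hxu : sigmaSq x < 763/2880 := by
    set f : ℕ → ℝ := fun k => (1 / 6 ^ (k + 1) : ℝ) *
      V (Int.fract ((2 : ℝ) ^ (k + 1) * x)) (Int.fract ((3 : ℝ) ^ (k + 1) * x)) with hf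
    have hsum := summable_term x
    have hsplit : ∑' k, f k = f 0 + ∑' k, f (k + 1) := Summable.tsum_eq_zero_add hsum
    -- head
    have hfr : Int.fract x = x := Int.fract_eq_self.mpr ⟨by linarith, by linarith⟩
    have hhead : V (Int.fract x) (Int.fract x) < 15/64 := by
      rw [hfr, V, min_self]; nlinarith
    -- k = 0 term
    have h2x : Int.fract ((2:ℝ)^(0+1) * x) = 2 * x := by
      rw [show (2:ℝ)^(0+1) * x = 2 * x by norm_num]
      exact Int.fract_eq_self.mpr ⟨by linarith, by linarith⟩
    have h3x : Int.fract ((3:ℝ)^(0+1) * x) = 3 * x - 1 := by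
      rw [show (3:ℝ)^(0+1) * x = (1:ℤ) + (3 * x - 1) by push_cast; ring]
      rw [Int.fract_intCast_add]
      exact Int.fract_eq_self.mpr ⟨by linarith, by linarith⟩
    have hf0 : f 0 ≤ 1/144 := by
      simp only [hf, h2x, h3x]
      have hmin : min (2 * x) (3 * x - 1) = 3 * x - 1 :=
        min_eq_right (by linarith)
      rw [V, hmin]
      nlinarith
    -- tail
    have htail : ∑' k, f (k + 1) ≤ 1/120 := by
      rw [← tsum_geom_aux]
      refine Summable.tsum_le_tsum (fun k => ?_) ((summable_nat_add_iff 1).mpr hsum)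
        summable_geom_aux
      exact term_le x (k + 1)
    have : sigmaSq x = V (Int.fract x) (Int.fract x) + 2 * (f 0 + ∑' k, f (k+1)) := by
      rw [sigmaSq, ← hsplit]
    rw [this]
    linarith
  have hcl : (763/2880 : ℝ) < sigmaSq c := by
    set g : ℕ → ℝ := fun k => (1 / 6 ^ (k + 1) : ℝ) *
      V (Int.fract ((2 : ℝ) ^ (k + 1) * c)) (Int.fract ((3 : ℝ) ^ (k + 1) * c)) with hg
    have hsum := summable_term c
    have hpartial : ∑ k ∈ Finset.range 2, g k ≤ ∑' k, g k :=
      Summable.sum_le_tsum _ (fun k _ => term_nonneg c k) hsum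
    have hcfr : Int.fract c = c := Int.fract_eq_self.mpr ⟨by rw [c]; norm_num, by rw [c]; norm_num⟩
    have h2c : Int.fract ((2:ℝ)^(0+1) * c) = 554/665 := by
      rw [show (2:ℝ)^(0+1) * c = 554/665 by rw [c]; norm_num]
      exact Int.fract_eq_self.mpr ⟨by norm_num, by norm_num⟩
    have h3c : Int.fract ((3:ℝ)^(0+1) * c) = 166/665 := by
      rw [show (3:ℝ)^(0+1) * c = (1:ℤ) + 166/665 by rw [c]; push_cast; norm_num]
      rw [Int.fract_intCast_add]
      exact Int.fract_eq_self.mpr ⟨by norm_num, by norm_num⟩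
    have h4c : Int.fract ((2:ℝ)^(1+1) * c) = 443/665 := by
      rw [show (2:ℝ)^(1+1) * c = (1:ℤ) + 443/665 by rw [c]; push_cast; norm_num]
      rw [Int.fract_intCast_add]
      exact Int.fract_eq_self.mpr ⟨by norm_num, by norm_num⟩
    have h9c : Int.fract ((3:ℝ)^(1+1) * c) = 498/665 := by
      rw [show (3:ℝ)^(1+1) * c = (3:ℤ) + 498/665 by rw [c]; push_cast; norm_num]
      rw [Int.fract_intCast_add]
      exact Int.fract_eq_self.mpr ⟨by norm_num, by norm_num⟩
    have hg0 : g 0 = (1/6) * (18426/442225) := by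
      simp only [hg, h2c, h3c, V]
      rw [min_eq_right (by norm_num : (166/665 : ℝ) ≤ 554/665)]
      norm_num
    have hg1 : g 1 = (1/36) * (73981/442225) := by
      simp only [hg, h4c, h9c, V]
      rw [min_eq_left (by norm_num : (443/665 : ℝ) ≤ 498/665)]
      norm_num
    have hps : ∑ k ∈ Finset.range 2, g k = (1/6) * (18426/442225) + (1/36) * (73981/442225) := by
      rw [Finset.sum_range_succ, Finset.sum_range_one, hg0, hg1]
    have hVcc : V (Int.fract c) (Int.fract c) = 107476/442225 := by
      rw [hcfr, V, min_self, c]; norm_num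
    have : sigmaSq c = V (Int.fract c) (Int.fract c) + 2 * ∑' k, g k := rfl
    rw [this, hVcc]
    rw [hps] at hpartial
    nlinarith
  linarith
end

section
/- For every x ∈ [3/8, 11/27), one has σ²(x) < σ²(c). -/
open scoped BigOperators

/-!
Truncate the series defining `σ²` after three terms; the tail is at most
`2 ∑_{k > 3} 6^{-k} / 4 = 6^{-3} / 10`. On `[3/8, 11/27)` none of `⌊2^k x⌋`, `⌊3^k x⌋`
(`k ≤ 3`) jumps, so, bounding each `min` by one of its arguments, the truncated sum is at most
the concave quadratic `-7x² + 607x/108 - 31/36`, whose maximum `87217/326592` (at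
`x = 607/1512`) plus the tail is still below the three-term partial sum of `σ²(c)`.
-/

open Finset

theorem Int.fract_eq_sub_of_le_of_lt {R : Type*} [Ring R] [LinearOrder R] [FloorRing R]
    (a : R) (n : ℤ) (h₁ : n ≤ a) (h₂ : a < n + 1) : Int.fract a = a - n := by
  rw [Int.fract, Int.floor_eq_iff.2 ⟨h₁, h₂⟩]

theorem V_self (a : ℝ) : V a a = a - a * a := by rw [V, min_self]

section V

variable {a b : ℝ}

theorem V_le_left : V a b ≤ a - a * b := sub_le_sub_right (min_le_left a b) _

theorem V_le_right : V a b ≤ b - a * b := sub_le_sub_right (min_le_right a b) _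

theorem V_nonneg (ha₀ : 0 ≤ a) (ha₁ : a ≤ 1) (hb₀ : 0 ≤ b) (hb₁ : b ≤ 1) : 0 ≤ V a b := by
  rcases le_total a b with h | h
  · rw [V, min_eq_left h]; linear_combination mul_nonneg ha₀ (sub_nonneg.2 hb₁)
  · rw [V, min_eq_right h]; linear_combination mul_nonneg hb₀ (sub_nonneg.2 ha₁)

theorem V_le_one_div_four (ha₀ : 0 ≤ a) (hb₀ : 0 ≤ b) : V a b ≤ 1 / 4 := by
  rcases le_total a b with h | h
  · rw [V, min_eq_left h]; nlinarith [sq_nonneg (a - 1 / 2)]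
  · rw [V, min_eq_right h]; nlinarith [sq_nonneg (b - 1 / 2)]

end V

noncomputable def sigmaSqTerm (x : ℝ) (k : ℕ) : ℝ :=
  (1 / 6 ^ (k + 1) : ℝ) *
    V (Int.fract ((2 : ℝ) ^ (k + 1) * x)) (Int.fract ((3 : ℝ) ^ (k + 1) * x))

noncomputable def sigmaSqPartial (K : ℕ) (x : ℝ) : ℝ :=
  V (Int.fract x) (Int.fract x) + 2 * ∑ k ∈ range K, sigmaSqTerm x k

section sigmaSqTerm

variable (x : ℝ) (k : ℕ)

theorem sigmaSqTerm_nonneg : 0 ≤ sigmaSqTerm x k :=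
  mul_nonneg (by positivity) <| V_nonneg (Int.fract_nonneg _) (Int.fract_lt_one _).le
    (Int.fract_nonneg _) (Int.fract_lt_one _).le

theorem sigmaSqTerm_le : sigmaSqTerm x k ≤ (1 / 6) ^ (k + 1) / 4 := by
  rw [sigmaSqTerm, one_div_pow, div_eq_mul_one_div _ (4 : ℝ)]
  exact mul_le_mul_of_nonneg_left (V_le_one_div_four (Int.fract_nonneg _) (Int.fract_nonneg _))
    (by positivity)

theorem summable_sigmaSqTerm : Summable (sigmaSqTerm x) := by
  refine .of_nonneg_of_le (sigmaSqTerm_nonneg x) (sigmaSqTerm_le x) ?_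
  exact ((summable_geometric_of_lt_one (by norm_num) (by norm_num)).comp_injective
    (add_left_injective 1)).div_const 4

end sigmaSqTerm

theorem sigmaSq_eq_sigmaSqPartial_add (K : ℕ) (x : ℝ) :
    sigmaSq x = sigmaSqPartial K x + 2 * ∑' k, sigmaSqTerm x (k + K) := by
  rw [sigmaSqPartial, add_assoc, ← mul_add, (summable_sigmaSqTerm x).sum_add_tsum_nat_add]
  rfl

theorem sigmaSqPartial_le_sigmaSq (K : ℕ) (x : ℝ) : sigmaSqPartial K x ≤ sigmaSq x := by
  have : 0 ≤ ∑' k, sigmaSqTerm x (k + K) := tsum_nonneg fun k ↦ sigmaSqTerm_nonneg x (k + K)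
  rw [sigmaSq_eq_sigmaSqPartial_add K]
  linarith

theorem sigmaSq_le_sigmaSqPartial_add (K : ℕ) (x : ℝ) :
    sigmaSq x ≤ sigmaSqPartial K x + (1 / 6) ^ K / 10 := by
  have hgeom := (hasSum_geometric_of_lt_one (r := (1 / 6 : ℝ)) (by norm_num) (by norm_num)).mul_left
    ((1 / 6) ^ (K + 1) / 4)
  have htail : ∑' k, sigmaSqTerm x (k + K) ≤ (1 / 6) ^ (K + 1) / 4 * (1 - 1 / 6)⁻¹ :=
    ((summable_nat_add_iff K).2 (summable_sigmaSqTerm x)).tsum_le_of_sum_le fun s ↦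
      (sum_le_sum fun k _ ↦ (sigmaSqTerm_le x (k + K)).trans_eq (by ring)).trans
        (sum_le_hasSum s (fun k _ ↦ by positivity) hgeom)
  have hval : (1 / 6 : ℝ) ^ (K + 1) / 4 * (1 - 1 / 6)⁻¹ = (1 / 6) ^ K / 20 := by ring
  rw [sigmaSq_eq_sigmaSqPartial_add K]
  linarith

theorem sigmaSqPartial_three_c : sigmaSqPartial 3 c = 304463 / 1137150 := by
  norm_num [sigmaSqPartial, sigmaSqTerm, sum_range_succ, c, V]

theorem sigmaSqPartial_three_le_of_mem_Ico {x : ℝ} (hx : x ∈ Set.Ico (3 / 8 : ℝ) (11 / 27)) :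
    sigmaSqPartial 3 x ≤ -7 * x ^ 2 + 607 / 108 * x - 31 / 36 := by
  obtain ⟨hx₁, hx₂⟩ := hx
  simp only [sigmaSqPartial, sigmaSqTerm, sum_range_succ, sum_range_zero]
  norm_num
  rw [(Int.fract_eq_self (a := x)).2 ⟨by linarith, by linarith⟩,
    (Int.fract_eq_self (a := 2 * x)).2 ⟨by linarith, by linarith⟩,
    Int.fract_eq_sub_of_le_of_lt (3 * x) 1 (by push_cast; linarith) (by push_cast; linarith),
    Int.fract_eq_sub_of_le_of_lt (4 * x) 1 (by push_cast; linarith) (by push_cast; linarith),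
    Int.fract_eq_sub_of_le_of_lt (9 * x) 3 (by push_cast; linarith) (by push_cast; linarith),
    Int.fract_eq_sub_of_le_of_lt (8 * x) 3 (by push_cast; linarith) (by push_cast; linarith),
    Int.fract_eq_sub_of_le_of_lt (27 * x) 10 (by push_cast; linarith) (by push_cast; linarith)]
  push_cast
  linear_combination V_self x + 2 / 6 * V_le_right (a := 2 * x) (b := 3 * x - 1) +
    2 / 36 * V_le_left (a := 4 * x - 1) (b := 9 * x - 3) +
    2 / 216 * V_le_left (a := 8 * x - 3) (b := 27 * x - 10)

theorem sigmaSq_lt_on_interval_10 (x : ℝ) (hx : x ∈ Set.Ico (3/8 : ℝ) (11/27)) :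
    sigmaSq x < sigmaSq c :=
  calc sigmaSq x ≤ sigmaSqPartial 3 x + (1 / 6) ^ 3 / 10 := sigmaSq_le_sigmaSqPartial_add 3 x
    _ ≤ -7 * x ^ 2 + 607 / 108 * x - 31 / 36 + (1 / 6) ^ 3 / 10 := by
      gcongr; exact sigmaSqPartial_three_le_of_mem_Ico hx
    _ < sigmaSqPartial 3 c := by
      rw [sigmaSqPartial_three_c]; nlinarith [sq_nonneg (x - 607 / 1512)]
    _ ≤ sigmaSq c := sigmaSqPartial_le_sigmaSq 3 c
end

section
/- For every x ∈ [73789/177147, 911/2187) with x ≠ c, one has σ²(x) < σ²(c); more precisely, σ² is strictly increasing on [73789/177147, c] and strictly decreasing on [c, 911/2187). (Here 177147 = 3^11 and 2187 = 3^7, and 73789/3^11 < c < 911/3^7.) -/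
open scoped BigOperators

/-!
On `[73789/3^11, c]` none of `2^k x`, `3^k x` (`k ≤ 12`) crosses an integer and the order of
their fractional parts is fixed, so the first twelve terms of `σ²` add up to an explicit quadratic;
likewise for `k ≤ 9` on `[c, 911/3^7)`. Its leading coefficient is `1 + 2·12`, resp. `1 + 2·9`,
because `2^k 3^k / 6^k = 1`. Since `u ↦ V(⟨u⟩, q)` is 1-Lipschitz, the `k`-th term is Lipschitz with
constant `2^{-k} + 3^{-k}`, so the tail is Lipschitz with a constant smaller than the slope of the
quadratic, which is positive left of `c` and negative right of it.
-/

open Set Finset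

lemma V_comm (p q : ℝ) : V p q = V q p := by
  rw [V, V, min_comm, mul_comm]

lemma V_eq_min (p q : ℝ) : V p q = min (p * (1 - q)) (q * (1 - p)) := by
  rw [V, ← min_sub_sub_right]; congr 1 <;> ring

lemma V_of_le {p q : ℝ} (h : p ≤ q) : V p q = p * (1 - q) := by
  rw [V, min_eq_left h]; ring

lemma V_of_ge {p q : ℝ} (h : q ≤ p) : V p q = q * (1 - p) := by
  rw [V, min_eq_right h]; ring

lemma abs_V_le_one {p q : ℝ} (hp : p ∈ Icc (0 : ℝ) 1) (hq : q ∈ Icc (0 : ℝ) 1) : |V p q| ≤ 1 := by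
  obtain ⟨hp0, hp1⟩ := hp
  obtain ⟨hq0, hq1⟩ := hq
  rw [V_eq_min, abs_le]
  exact ⟨le_min (by nlinarith) (by nlinarith), (min_le_left _ _).trans (by nlinarith)⟩

lemma abs_V_sub_V_le {p p' q : ℝ} (hq : q ∈ Icc (0 : ℝ) 1) : |V p q - V p' q| ≤ |p - p'| := by
  rw [V_eq_min, V_eq_min]
  refine (abs_min_sub_min_le_max _ _ _ _).trans (max_le ?_ ?_)
  · rw [← sub_mul, abs_mul, abs_of_nonneg (sub_nonneg.2 hq.2)]
    exact mul_le_of_le_one_right (abs_nonneg _) (by linarith [hq.1])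
  · rw [← mul_sub, abs_mul, abs_of_nonneg hq.1, sub_sub_sub_cancel_left, abs_sub_comm]
    exact mul_le_of_le_one_left (abs_nonneg _) hq.2

lemma Int.fract_mem_Icc (u : ℝ) : Int.fract u ∈ Icc (0 : ℝ) 1 :=
  ⟨Int.fract_nonneg u, (Int.fract_lt_one u).le⟩

lemma LipschitzOnWith.comp_fract {f : ℝ → ℝ} {K : NNReal} (hf : LipschitzOnWith K f (Icc 0 1))
    (h01 : f 0 = f 1) : LipschitzWith K (f ∘ Int.fract) := by
  have key : ∀ u v : ℝ, u ≤ v → dist (f (Int.fract v)) (f (Int.fract u)) ≤ K * (v - u) := by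
    intro u v huv
    rcases (Int.floor_mono huv).eq_or_lt with h | h
    · have : Int.fract v - Int.fract u = v - u := by unfold Int.fract; rw [h]; ring
      calc dist (f (Int.fract v)) (f (Int.fract u)) ≤ K * dist (Int.fract v) (Int.fract u) :=
            hf.dist_le_mul _ (Int.fract_mem_Icc v) _ (Int.fract_mem_Icc u)
        _ = K * (v - u) := by rw [Real.dist_eq, this, abs_of_nonneg (sub_nonneg.2 huv)]
    · -- across an integer, pass through `f 1 = f 0`
      have hjump : Int.fract v + (1 - Int.fract u) ≤ v - u := by
        have : (⌊u⌋ : ℝ) + 1 ≤ ⌊v⌋ := by exact_mod_cast Int.add_one_le_of_lt h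
        unfold Int.fract; linarith
      calc dist (f (Int.fract v)) (f (Int.fract u))
          ≤ dist (f (Int.fract v)) (f 0) + dist (f 1) (f (Int.fract u)) := by
            rw [h01]; exact dist_triangle _ _ _
        _ ≤ K * dist (Int.fract v) 0 + K * dist 1 (Int.fract u) :=
            add_le_add (hf.dist_le_mul _ (Int.fract_mem_Icc v) _ ⟨le_rfl, zero_le_one⟩)
              (hf.dist_le_mul _ ⟨zero_le_one, le_rfl⟩ _ (Int.fract_mem_Icc u))
        _ = K * (Int.fract v + (1 - Int.fract u)) := by
            rw [Real.dist_eq, Real.dist_eq, sub_zero, abs_of_nonneg (Int.fract_nonneg v),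
              abs_of_nonneg (sub_nonneg.2 (Int.fract_lt_one u).le), mul_add]
        _ ≤ K * (v - u) := by gcongr
  refine LipschitzWith.of_dist_le_mul fun u v => ?_
  rcases le_total u v with huv | hvu
  · rw [dist_comm, dist_comm u, Real.dist_eq v, abs_of_nonneg (sub_nonneg.2 huv)]
    exact key u v huv
  · rw [Real.dist_eq u, abs_of_nonneg (sub_nonneg.2 hvu)]
    exact key v u hvu

lemma lipschitzWith_V_fract {q : ℝ} (hq : q ∈ Icc (0 : ℝ) 1) :
    LipschitzWith 1 fun u => V (Int.fract u) q := by
  have hV : LipschitzWith 1 fun p => V p q :=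
    LipschitzWith.of_dist_le_mul fun p p' => by
      simpa only [Real.dist_eq, NNReal.coe_one, one_mul] using abs_V_sub_V_le hq
  exact hV.lipschitzOnWith.comp_fract (by simp [V, hq.1, hq.2])

lemma abs_V_fract_mul_sub_le {α β : ℝ} (hα : 0 ≤ α) (hβ : 0 ≤ β) (x y : ℝ) :
    |V (Int.fract (α * y)) (Int.fract (β * y)) - V (Int.fract (α * x)) (Int.fract (β * x))| ≤
      (α + β) * |y - x| := by
  have h1 := (lipschitzWith_V_fract (Int.fract_mem_Icc (β * y))).dist_le_mul (α * y) (α * x)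
  have h2 := (lipschitzWith_V_fract (Int.fract_mem_Icc (α * x))).dist_le_mul (β * y) (β * x)
  simp only [Real.dist_eq, NNReal.coe_one, one_mul, ← mul_sub, abs_mul, abs_of_nonneg hα,
    abs_of_nonneg hβ] at h1 h2
  rw [V_comm _ (Int.fract (α * x)), V_comm _ (Int.fract (α * x))] at h2
  calc _ ≤ _ := abs_sub_le _ (V (Int.fract (α * x)) (Int.fract (β * y))) _
    _ ≤ α * |y - x| + β * |y - x| := add_le_add h1 h2
    _ = (α + β) * |y - x| := by ring

noncomputable def sigmaTerm (x : ℝ) (k : ℕ) : ℝ :=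
  (1 / 6 ^ (k + 1) : ℝ) * V (Int.fract ((2 : ℝ) ^ (k + 1) * x)) (Int.fract ((3 : ℝ) ^ (k + 1) * x))

lemma summable_sigmaTerm (x : ℝ) : Summable (sigmaTerm x) := by
  refine Summable.of_norm_bounded
    ((summable_nat_add_iff 1).2 (summable_geometric_of_lt_one (r := 1 / 6) (by norm_num)
      (by norm_num))) fun k => ?_
  calc ‖sigmaTerm x k‖ = 1 / 6 ^ (k + 1) * |V (Int.fract ((2 : ℝ) ^ (k + 1) * x))
        (Int.fract ((3 : ℝ) ^ (k + 1) * x))| := by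
        rw [sigmaTerm, Real.norm_eq_abs, abs_mul, abs_of_pos (by positivity)]
    _ ≤ 1 / 6 ^ (k + 1) * 1 := by
        gcongr; exact abs_V_le_one (Int.fract_mem_Icc _) (Int.fract_mem_Icc _)
    _ = (1 / 6) ^ (k + 1) := by rw [mul_one, one_div_pow]

lemma abs_sigmaTerm_sub_le (x y : ℝ) (k : ℕ) :
    |sigmaTerm y k - sigmaTerm x k| ≤ ((1 / 3) ^ (k + 1) + (1 / 2) ^ (k + 1)) * |y - x| := by
  calc |sigmaTerm y k - sigmaTerm x k|
      = 1 / 6 ^ (k + 1) * |V (Int.fract ((2 : ℝ) ^ (k + 1) * y)) (Int.fract ((3 : ℝ) ^ (k + 1) * y))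
          - V (Int.fract ((2 : ℝ) ^ (k + 1) * x)) (Int.fract ((3 : ℝ) ^ (k + 1) * x))| := by
        rw [sigmaTerm, sigmaTerm, ← mul_sub, abs_mul, abs_of_pos (by positivity)]
    _ ≤ 1 / 6 ^ (k + 1) * ((2 ^ (k + 1) + 3 ^ (k + 1)) * |y - x|) := by
        gcongr; exact abs_V_fract_mul_sub_le (by positivity) (by positivity) x y
    _ = ((1 / 3) ^ (k + 1) + (1 / 2) ^ (k + 1)) * |y - x| := by
        rw [show (6 : ℝ) ^ (k + 1) = 2 ^ (k + 1) * 3 ^ (k + 1) by rw [← mul_pow]; norm_num,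
          one_div_pow, one_div_pow]
        field_simp

noncomputable def sigmaTail (K : ℕ) (x : ℝ) : ℝ := ∑' k, sigmaTerm x (k + K)

lemma sigmaSq_eq_sum_add_sigmaTail (K : ℕ) (x : ℝ) :
    sigmaSq x = V (Int.fract x) (Int.fract x) +
      2 * (∑ k ∈ range K, sigmaTerm x k + sigmaTail K x) := by
  rw [sigmaTail, (summable_sigmaTerm x).sum_add_tsum_nat_add]; rfl

lemma abs_tsum_sub_tsum_le {ι : Type*} {f g L : ι → ℝ} (hf : Summable f) (hg : Summable g)
    (hL : Summable L) (h : ∀ i, |f i - g i| ≤ L i) : |∑' i, f i - ∑' i, g i| ≤ ∑' i, L i := by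
  have hs : Summable fun i => ‖f i - g i‖ := hL.of_nonneg_of_le (fun _ => norm_nonneg _) h
  rw [← hf.tsum_sub hg]
  exact (norm_tsum_le_tsum_norm hs).trans (hs.tsum_le_tsum h hL)

lemma abs_sigmaTail_sub_le (K : ℕ) (x y : ℝ) :
    |sigmaTail K y - sigmaTail K x| ≤ ((1 / 3) ^ K / 2 + (1 / 2) ^ K) * |y - x| := by
  have hsum : HasSum (fun k : ℕ => ((1 / 3 : ℝ) ^ (k + K + 1) + (1 / 2) ^ (k + K + 1)) * |y - x|)
      (((1 / 3) ^ K / 2 + (1 / 2) ^ K) * |y - x|) := by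
    have h3 := (hasSum_geometric_of_lt_one (r := (1 / 3 : ℝ)) (by norm_num) (by norm_num)).mul_left
      ((1 / 3) ^ (K + 1))
    have h2 := (hasSum_geometric_of_lt_one (r := (1 / 2 : ℝ)) (by norm_num) (by norm_num)).mul_left
      ((1 / 2) ^ (K + 1))
    rw [show ((1 / 3 : ℝ) ^ K / 2 + (1 / 2) ^ K) = (1 / 3) ^ (K + 1) * (1 - 1 / 3)⁻¹ +
      (1 / 2) ^ (K + 1) * (1 - 1 / 2)⁻¹ by ring]
    exact ((h3.add h2).mul_right |y - x|).congr_fun fun k => by ring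
  rw [← hsum.tsum_eq]
  exact abs_tsum_sub_tsum_le ((summable_nat_add_iff K).2 (summable_sigmaTerm y))
    ((summable_nat_add_iff K).2 (summable_sigmaTerm x)) hsum.summable
    fun k => abs_sigmaTerm_sub_le x y (k + K)

-- `V (fract (α x)) (fract (β x))` for `x` in the cell to the right of `a`: floors frozen at `a`,
-- branch of the `min` chosen at `a`.
noncomputable def quadPiece (α β a x : ℝ) : ℝ :=
  if Int.fract (α * a) ≤ Int.fract (β * a) then
    (α * x - ⌊α * a⌋) * (1 - (β * x - ⌊β * a⌋))
  else (β * x - ⌊β * a⌋) * (1 - (α * x - ⌊α * a⌋))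

lemma V_fract_eq_quadPiece {α β a x : ℝ} (hα : 0 ≤ α) (hαβ : α ≤ β) (hax : a ≤ x)
    (hαx : α * x < ⌊α * a⌋ + 1) (hβx : β * x < ⌊β * a⌋ + 1)
    (horder : Int.fract (β * a) < Int.fract (α * a) → (β - α) * x ≤ ⌊β * a⌋ - ⌊α * a⌋) :
    V (Int.fract (α * x)) (Int.fract (β * x)) = quadPiece α β a x := by
  have fract_eq : ∀ t, 0 ≤ t → t * x < ⌊t * a⌋ + 1 → Int.fract (t * x) = t * x - ⌊t * a⌋ :=
    fun t ht h => by
      rw [Int.fract, Int.floor_eq_iff.2 ⟨(Int.floor_le _).trans (by gcongr), h⟩]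
  rw [fract_eq α hα hαx, fract_eq β (hα.trans hαβ) hβx, quadPiece]
  split_ifs with h
  · refine V_of_le ?_
    unfold Int.fract at h
    nlinarith [mul_nonneg (sub_nonneg.2 hαβ) (sub_nonneg.2 hax)]
  · refine V_of_ge ?_
    linarith [horder (not_le.1 h)]

lemma sigmaSq_eq_sum_quadPiece_add_sigmaTail {K : ℕ} {a x : ℝ} (ha : 0 ≤ a) (hax : a ≤ x)
    (hx : x < 1)
    (hcell : ∀ k < K, (2 : ℝ) ^ (k + 1) * x < ⌊(2 : ℝ) ^ (k + 1) * a⌋ + 1 ∧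
      (3 : ℝ) ^ (k + 1) * x < ⌊(3 : ℝ) ^ (k + 1) * a⌋ + 1 ∧
      (Int.fract ((3 : ℝ) ^ (k + 1) * a) < Int.fract ((2 : ℝ) ^ (k + 1) * a) →
        ((3 : ℝ) ^ (k + 1) - 2 ^ (k + 1)) * x ≤
          ⌊(3 : ℝ) ^ (k + 1) * a⌋ - ⌊(2 : ℝ) ^ (k + 1) * a⌋)) :
    sigmaSq x = x * (1 - x) + 2 * (∑ k ∈ range K,
      1 / 6 ^ (k + 1) * quadPiece (2 ^ (k + 1)) (3 ^ (k + 1)) a x + sigmaTail K x) := by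
  rw [sigmaSq_eq_sum_add_sigmaTail K, Int.fract_eq_self.2 ⟨ha.trans hax, hx⟩, V_of_le le_rfl]
  congr 3
  refine Finset.sum_congr rfl fun k hk => ?_
  obtain ⟨h2, h3, horder⟩ := hcell k (Finset.mem_range.1 hk)
  rw [sigmaTerm, V_fract_eq_quadPiece (by positivity)
    (pow_le_pow_left₀ (by norm_num) (by norm_num) _) hax h2 h3 horder]

lemma sigmaSq_eq_on_left {x : ℝ} (hx : x ∈ Icc (73789 / 177147 : ℝ) c) :
    sigmaSq x = -1476806371 / 362797056 + 7556871593 / 362797056 * x - 25 * x ^ 2 +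
      2 * sigmaTail 12 x := by
  obtain ⟨h1, h2⟩ := hx
  rw [c] at h2
  rw [sigmaSq_eq_sum_quadPiece_add_sigmaTail (K := 12) (by norm_num) h1 (by linarith)]
  · simp only [Finset.sum_range_succ, Finset.sum_range_zero, quadPiece]
    norm_num [Int.fract]
    ring
  · intro k hk
    interval_cases k <;> refine ⟨?_, ?_, fun _ => ?_⟩ <;> norm_num [Int.fract] at * <;> linarith

lemma sigmaSq_eq_on_right {x : ℝ} (hx : x ∈ Ico c (911 / 2187 : ℝ)) :
    sigmaSq x = -1689011 / 559872 + 982903 / 62208 * x - 19 * x ^ 2 + 2 * sigmaTail 9 x := by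
  obtain ⟨h1, h2⟩ := hx
  rw [c] at h1
  rw [sigmaSq_eq_sum_quadPiece_add_sigmaTail (K := 9) (by norm_num) h1 (by linarith)]
  · simp only [Finset.sum_range_succ, Finset.sum_range_zero, quadPiece]
    norm_num [Int.fract]
    ring
  · intro k hk
    interval_cases k <;> refine ⟨?_, ?_, fun _ => ?_⟩ <;> norm_num [Int.fract] at * <;> linarith

lemma strictMonoOn_of_eq_quadratic_add {f g : ℝ → ℝ} {s : Set ℝ} {A B C L M : ℝ}
    (hf : ∀ x ∈ s, f x = C + B * x - A * x ^ 2 + g x) (hA : 0 ≤ A) (hM : ∀ x ∈ s, x ≤ M)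
    (hg : ∀ x y, |g y - g x| ≤ L * |y - x|) (hL : L < B - 2 * A * M) : StrictMonoOn f s := by
  intro x hx y hy hxy
  have hgxy := (abs_le.1 (hg x y)).1
  rw [abs_of_pos (sub_pos.2 hxy)] at hgxy
  rw [hf x hx, hf y hy]
  nlinarith [mul_nonneg (mul_nonneg hA (sub_pos.2 hxy).le) (sub_nonneg.2 (hM x hx)),
    mul_nonneg (mul_nonneg hA (sub_pos.2 hxy).le) (sub_nonneg.2 (hM y hy)),
    mul_pos (sub_pos.2 hxy) (sub_pos.2 hL)]

lemma strictAntiOn_of_eq_quadratic_add {f g : ℝ → ℝ} {s : Set ℝ} {A B C L M : ℝ}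
    (hf : ∀ x ∈ s, f x = C + B * x - A * x ^ 2 + g x) (hA : 0 ≤ A) (hM : ∀ x ∈ s, M ≤ x)
    (hg : ∀ x y, |g y - g x| ≤ L * |y - x|) (hL : L < 2 * A * M - B) : StrictAntiOn f s := by
  intro x hx y hy hxy
  have hgxy := (abs_le.1 (hg x y)).2
  rw [abs_of_pos (sub_pos.2 hxy)] at hgxy
  rw [hf x hx, hf y hy]
  nlinarith [mul_nonneg (mul_nonneg hA (sub_pos.2 hxy).le) (sub_nonneg.2 (hM x hx)),
    mul_nonneg (mul_nonneg hA (sub_pos.2 hxy).le) (sub_nonneg.2 (hM y hy)),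
    mul_pos (sub_pos.2 hxy) (sub_pos.2 hL)]

lemma abs_two_mul_sigmaTail_sub_le (K : ℕ) (x y : ℝ) :
    |2 * sigmaTail K y - 2 * sigmaTail K x| ≤ 2 * ((1 / 3) ^ K / 2 + (1 / 2) ^ K) * |y - x| := by
  rw [← mul_sub, abs_mul, abs_two, mul_assoc]
  gcongr
  exact abs_sigmaTail_sub_le K x y

theorem sigmaSq_max_near_c :
    (∀ x ∈ Set.Ico (73789/177147 : ℝ) (911/2187), x ≠ c → sigmaSq x < sigmaSq c) ∧
      StrictMonoOn sigmaSq (Set.Icc (73789/177147 : ℝ) c) ∧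
      StrictAntiOn sigmaSq (Set.Ico c (911/2187 : ℝ)) := by
  have hmono : StrictMonoOn sigmaSq (Icc (73789 / 177147 : ℝ) c) :=
    strictMonoOn_of_eq_quadratic_add (g := fun x => 2 * sigmaTail 12 x)
      (fun x hx => sigmaSq_eq_on_left hx) (by norm_num) (fun x hx => hx.2)
      (abs_two_mul_sigmaTail_sub_le 12) (by norm_num [c])
  have hanti : StrictAntiOn sigmaSq (Ico c (911 / 2187 : ℝ)) :=
    strictAntiOn_of_eq_quadratic_add (g := fun x => 2 * sigmaTail 9 x)
      (fun x hx => sigmaSq_eq_on_right hx) (by norm_num) (fun x hx => hx.1)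
      (abs_two_mul_sigmaTail_sub_le 9) (by norm_num [c])
  refine ⟨fun x hx hxc => ?_, hmono, hanti⟩
  rcases hxc.lt_or_gt with hlt | hgt
  · exact hmono ⟨hx.1, hlt.le⟩ ⟨by norm_num [c], le_rfl⟩ hlt
  · exact hanti ⟨le_rfl, by norm_num [c]⟩ ⟨hgt.le, hx.2⟩ hgt
end
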